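/- Let k be a field and t ≥ 3, y ≥ 3 integers. Let X = J_t ⊕ J_1 and Y = J_y ⊕ J_2, and let C : X → Y be the k[T]-linear map with components: multiplication by T^{y−2} from J_t to J_y; the canonical reduction map (multiplication by 1) from J_t to J_2; multiplication by T from J_1 to J_2; and zero from J_1 to J_y. Then T²∘C = 0 and the triple (X, Y, C) is indecomposable. -/

import Mathlib

open Polynomial

/-- `J K a` is the `K[T]`-module `K[T]/(T^a)` (with `T` the polynomial variable `X`). -/
abbrev J (K : Type*) [Field K] (a : ℕ) : Type _ :=
  Polynomial K ⧸ Ideal.span {(X : Polynomial K) ^ a}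

/-- Multiplication by `T^e` as a `K[T]`-linear map `J_a → J_b`; it is well defined
when `b ≤ e + a`, and we set it to `0` otherwise. -/
noncomputable def mulTpow (K : Type*) [Field K] (a b e : ℕ) :
    J K a →ₗ[Polynomial K] J K b :=
  if h : b ≤ e + a then
    Submodule.liftQ (Ideal.span {(X : Polynomial K) ^ a})
      ((Ideal.span {(X : Polynomial K) ^ b}).mkQ ∘ₗ
        ((X : Polynomial K) ^ e • (LinearMap.id : Polynomial K →ₗ[Polynomial K] Polynomial K)))
      (by
        refine Submodule.span_le.mpr ?_
        intro x hx
        rw [Set.mem_singleton_iff] at hx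
        subst hx
        simp only [SetLike.mem_coe, LinearMap.mem_ker, LinearMap.comp_apply,
          LinearMap.smul_apply, LinearMap.id_apply, Submodule.mkQ_apply,
          Submodule.Quotient.mk_eq_zero, smul_eq_mul]
        exact Ideal.mem_span_singleton.mpr (by
          rw [← pow_add]; exact pow_dvd_pow X h))
  else 0

/-- A triple `(M, N, C)` is indecomposable if `M ⊕ N ≠ 0` and the only idempotent
endomorphism pairs `(F, G)` (i.e. `G ∘ C = C ∘ F`, `F² = F`, `G² = G`) are `(0, 0)` and
`(id, id)`. -/
def TripleIndecomposable {K : Type*} [Field K] {M N : Type*}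
    [AddCommGroup M] [Module (Polynomial K) M]
    [AddCommGroup N] [Module (Polynomial K) N] (C : M →ₗ[Polynomial K] N) : Prop :=
  (Nontrivial M ∨ Nontrivial N) ∧
  ∀ (F : M →ₗ[Polynomial K] M) (G : N →ₗ[Polynomial K] N),
    G ∘ₗ C = C ∘ₗ F → F ∘ₗ F = F → G ∘ₗ G = G →
      (F = 0 ∧ G = 0) ∨ (F = LinearMap.id ∧ G = LinearMap.id)

/-!
Write an endomorphism of `J_{m₀} ⊕ J_{m₁}` as a `2 × 2` matrix of polynomials whose rows are
determined modulo `T^{m₀}` and `T^{m₁}`. For an idempotent such matrix whose diagonal entries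
have the same constant term `ε`, the trace minus one, `a + d - 1`, has constant term
`2ε - 1 = ±1`, hence is a unit modulo every power of `T`, and the idempotent relations force
the matrix to be `ε` times the identity. For an idempotent pair `(F, G)` compatible with `C`, comparing a few low
order coefficients of `G ∘ C = C ∘ F` (this is where `t, y ≥ 3` enter) shows that the four
diagonal entries of `F` and `G` share one constant term `ε ∈ {0, 1}`, so
`(F, G) = ε • (id, id)`.
-/

open Matrix

namespace Polynomial

theorem X_pow_dvd_of_dvd_mul_left {K : Type*} [Field K] {n : ℕ} {u v : K[X]}
    (hu : u.coeff 0 ≠ 0) (h : X ^ n ∣ u * v) : X ^ n ∣ v :=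
  ((prime_X.coprime_iff_not_dvd.mpr (by rwa [X_dvd_iff])).pow_left).dvd_of_dvd_mul_left h

end Polynomial

namespace J

variable {K : Type*} [Field K]

noncomputable abbrev mk (a : ℕ) (p : K[X]) : J K a := Ideal.Quotient.mk _ p

theorem mk_eq_mk_iff {a : ℕ} {p q : K[X]} : mk a p = mk a q ↔ X ^ a ∣ p - q := by
  rw [Ideal.Quotient.eq, Ideal.mem_span_singleton]

@[simp]
theorem mk_eq_zero_iff {a : ℕ} {p : K[X]} : mk a p = 0 ↔ X ^ a ∣ p := by
  rw [Ideal.Quotient.eq_zero_iff_mem, Ideal.mem_span_singleton]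

theorem mulTpow_mk {a b e : ℕ} (h : b ≤ e + a) (p : K[X]) :
    mulTpow K a b e (mk a p) = mk b (X ^ e * p) := by
  rw [mulTpow, dif_pos h]
  rfl

variable (K) in
noncomputable def mk₂ (m₀ m₁ : ℕ) : (Fin 2 → K[X]) →ₗ[K[X]] J K m₀ × J K m₁ :=
  (Submodule.mkQ (Ideal.span {(X : K[X]) ^ m₀}) ∘ₗ LinearMap.proj 0).prod
    (Submodule.mkQ (Ideal.span {(X : K[X]) ^ m₁}) ∘ₗ LinearMap.proj 1)

variable {m₀ m₁ n₀ n₁ l₀ l₁ : ℕ}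

theorem mk₂_apply (v : Fin 2 → K[X]) : mk₂ K m₀ m₁ v = (mk m₀ (v 0), mk m₁ (v 1)) :=
  rfl

theorem nontrivial {a : ℕ} (ha : a ≠ 0) : Nontrivial (J K a) :=
  Ideal.Quotient.nontrivial_iff.mpr fun h => not_isUnit_X <|
    (isUnit_pow_iff ha).mp (Ideal.span_singleton_eq_top.mp h)

theorem mk₂_surjective : Function.Surjective (mk₂ K m₀ m₁) := by
  rintro ⟨x₀, x₁⟩
  obtain ⟨p₀, rfl⟩ := Ideal.Quotient.mk_surjective x₀
  obtain ⟨p₁, rfl⟩ := Ideal.Quotient.mk_surjective x₁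
  exact ⟨![p₀, p₁], rfl⟩

theorem mk₂_eq_mk₂_iff {v w : Fin 2 → K[X]} :
    mk₂ K m₀ m₁ v = mk₂ K m₀ m₁ w ↔ X ^ m₀ ∣ v 0 - w 0 ∧ X ^ m₁ ∣ v 1 - w 1 := by
  simp only [mk₂_apply, Prod.mk.injEq, mk_eq_mk_iff]

def Represents (F : J K m₀ × J K m₁ →ₗ[K[X]] J K n₀ × J K n₁)
    (M : Matrix (Fin 2) (Fin 2) K[X]) : Prop :=
  F ∘ₗ mk₂ K m₀ m₁ = mk₂ K n₀ n₁ ∘ₗ M.mulVecLin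

def ModEqRows (n₀ n₁ : ℕ) (M M' : Matrix (Fin 2) (Fin 2) K[X]) : Prop :=
  ∀ j, X ^ n₀ ∣ M 0 j - M' 0 j ∧ X ^ n₁ ∣ M 1 j - M' 1 j

variable {F F' : J K m₀ × J K m₁ →ₗ[K[X]] J K n₀ × J K n₁}
  {M M' : Matrix (Fin 2) (Fin 2) K[X]}

theorem Represents.apply (h : Represents F M) (v : Fin 2 → K[X]) :
    F (mk₂ K m₀ m₁ v) = mk₂ K n₀ n₁ (M *ᵥ v) :=
  LinearMap.congr_fun h v

theorem Represents.comp {G : J K n₀ × J K n₁ →ₗ[K[X]] J K l₀ × J K l₁}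
    {N : Matrix (Fin 2) (Fin 2) K[X]} (hG : Represents G N) (hF : Represents F M) :
    Represents (G ∘ₗ F) (N * M) := by
  rw [Represents, LinearMap.comp_assoc, hF, ← LinearMap.comp_assoc, hG, LinearMap.comp_assoc,
    Matrix.mulVecLin_mul]

theorem exists_represents (F : J K m₀ × J K m₁ →ₗ[K[X]] J K n₀ × J K n₁) :
    ∃ M, Represents F M := by
  choose M hM using fun j => mk₂_surjective (F (mk₂ K m₀ m₁ (Pi.single j 1)))
  refine ⟨Matrix.of fun i j => M j i, ?_⟩
  refine LinearMap.pi_ext' fun j => LinearMap.ext_ring ?_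
  simp only [LinearMap.comp_apply, LinearMap.single_apply, mulVecLin_apply, mulVec_single_one]
  exact (hM j).symm

theorem Represents.eq_iff (hF : Represents F M) (hF' : Represents F' M') :
    F = F' ↔ ModEqRows n₀ n₁ M M' := by
  constructor
  · rintro rfl j
    have h := (hF.apply (Pi.single j 1)).symm.trans (hF'.apply (Pi.single j 1))
    rwa [mulVec_single_one, mulVec_single_one, mk₂_eq_mk₂_iff] at h
  · intro h
    refine (LinearMap.cancel_right mk₂_surjective).mp ?_
    rw [hF, hF']
    refine LinearMap.pi_ext' fun j => LinearMap.ext_ring ?_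
    simp only [LinearMap.comp_apply, LinearMap.single_apply, mulVecLin_apply, mulVec_single_one]
    exact mk₂_eq_mk₂_iff.mpr (h j)

theorem represents_smul_id (r : K[X]) :
    Represents (r • LinearMap.id : J K m₀ × J K m₁ →ₗ[K[X]] J K m₀ × J K m₁) (r • 1) := by
  refine LinearMap.pi_ext' fun j => LinearMap.ext_ring ?_
  simp

theorem Represents.X_pow_dvd_X_pow_mul (h : Represents F M) : X ^ n₀ ∣ X ^ m₁ * M 0 1 := by
  have hzero : mk₂ K m₀ m₁ ((X : K[X]) ^ m₁ • Pi.single 1 1) = 0 := by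
    rw [mk₂_apply]
    simp
  have := h.apply ((X : K[X]) ^ m₁ • Pi.single 1 1)
  rw [hzero, map_zero, Matrix.mulVec_smul, Matrix.mulVec_single_one] at this
  rw [mk₂_apply, eq_comm, Prod.mk_eq_zero, mk_eq_zero_iff, mk_eq_zero_iff] at this
  exact this.1

theorem modEqRows_C_smul_one_of_mul_self (hm : m₁ ≤ m₀)
    {A : Matrix (Fin 2) (Fin 2) K[X]} (hA : ModEqRows m₀ m₁ (A * A) A) {ε : K}
    (hε : IsIdempotentElem ε) (h₀ : (A 0 0).coeff 0 = ε) (h₁ : (A 1 1).coeff 0 = ε) :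
    ModEqRows m₀ m₁ A (C ε • 1) := by
  obtain ⟨h00, h10⟩ := hA 0
  obtain ⟨h01, h11⟩ := hA 1
  simp only [mul_apply, Fin.sum_univ_two] at h00 h10 h01 h11
  set a := A 0 0
  set b := A 0 1
  set c := A 1 0
  set d := A 1 1
  have hε' : ε + ε - 1 ≠ 0 := by
    rcases IsIdempotentElem.iff_eq_zero_or_one.mp hε with rfl | rfl <;> norm_num
  have hCε : C ε * C ε = C ε := by rw [← C_mul, hε.eq]
  -- `(A² - A) 0 1 = (a + d - 1) * b` and `(A² - A) 1 0 = (a + d - 1) * c`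
  have hb : X ^ m₀ ∣ b := X_pow_dvd_of_dvd_mul_left (u := a + d - 1)
    (by simp [h₀, h₁, hε']) (by convert h01 using 1; ring)
  have hc : X ^ m₁ ∣ c := X_pow_dvd_of_dvd_mul_left (u := a + d - 1)
    (by simp [h₀, h₁, hε']) (by convert h10 using 1; ring)
  have ha : X ^ m₀ ∣ a - C ε :=
    X_pow_dvd_of_dvd_mul_left (u := a + C ε - 1) (by simp [h₀, hε'])
      (by convert dvd_sub h00 (hb.mul_right c) using 1; linear_combination (-1 : K[X]) * hCε)
  have hd : X ^ m₁ ∣ d - C ε :=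
    X_pow_dvd_of_dvd_mul_left (u := d + C ε - 1) (by simp [h₁, hε'])
      (by convert dvd_sub h11 (((pow_dvd_pow X hm).trans hb).mul_left c) using 1
          linear_combination (-1 : K[X]) * hCε)
  intro j
  fin_cases j
  · simpa using ⟨ha, hc⟩
  · simpa using ⟨hb, hd⟩

theorem isIdempotentElem_coeff_zero_of_mul_self (hm : m₀ ≠ 0)
    {A : Matrix (Fin 2) (Fin 2) K[X]} (hA : ModEqRows m₀ m₁ (A * A) A) (hb : X ∣ A 0 1) :
    IsIdempotentElem ((A 0 0).coeff 0) := by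
  have h := X_pow_dvd_iff.mp (hA 0).1 0 (by omega)
  rw [X_dvd_iff] at hb
  simp only [mul_apply, Fin.sum_univ_two, coeff_sub, coeff_add, mul_coeff_zero, hb] at h
  unfold IsIdempotentElem
  linear_combination h

theorem Represents.eq_C_smul_id_of_comp_self (hm : m₁ ≤ m₀)
    {F : J K m₀ × J K m₁ →ₗ[K[X]] J K m₀ × J K m₁} {A : Matrix (Fin 2) (Fin 2) K[X]}
    (hF : Represents F A) (hFF : F ∘ₗ F = F) {ε : K} (hε : IsIdempotentElem ε)
    (h₀ : (A 0 0).coeff 0 = ε) (h₁ : (A 1 1).coeff 0 = ε) :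
    F = C ε • LinearMap.id :=
  (hF.eq_iff (represents_smul_id _)).mpr <|
    modEqRows_C_smul_one_of_mul_self hm (((hF.comp hF).eq_iff hF).mp hFF) hε h₀ h₁

end J

open J

section

variable {K : Type*} [Field K]

variable (K) in
noncomputable def tripleMap (t y : ℕ) : J K t × J K 1 →ₗ[K[X]] J K y × J K 2 :=
  LinearMap.prod ((mulTpow K t y (y - 2)).coprod 0)
    ((mulTpow K t 2 0).coprod (mulTpow K 1 2 1))

variable (K) in
noncomputable def tripleMatrix (y : ℕ) : Matrix (Fin 2) (Fin 2) K[X] :=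
  !![X ^ (y - 2), 0; 1, X]

theorem represents_tripleMap {t y : ℕ} (ht : 2 ≤ t) :
    Represents (tripleMap K t y) (tripleMatrix K y) := by
  refine LinearMap.pi_ext' fun j => LinearMap.ext_ring ?_
  simp only [LinearMap.comp_apply, LinearMap.single_apply, mulVecLin_apply, mulVec_single_one,
    mk₂_apply, tripleMap, LinearMap.prod_apply, Function.prod, LinearMap.coprod_apply,
    LinearMap.zero_apply]
  rw [mulTpow_mk (by omega), mulTpow_mk (by omega), mulTpow_mk (by omega)]
  fin_cases j <;> simp [tripleMatrix]

theorem X_sq_smul_tripleMap {t y : ℕ} (ht : 2 ≤ t) (hy : 2 ≤ y) (x : J K t × J K 1) :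
    (X : K[X]) ^ 2 • tripleMap K t y x = 0 := by
  obtain ⟨k, rfl⟩ : ∃ k, y = k + 2 := ⟨y - 2, by omega⟩
  obtain ⟨v, rfl⟩ := mk₂_surjective x
  rw [(represents_tripleMap ht).apply, ← map_smul, mk₂_apply, Prod.mk_eq_zero, mk_eq_zero_iff,
    mk_eq_zero_iff]
  constructor
  · refine ⟨v 0, ?_⟩
    simp only [tripleMatrix, add_tsub_cancel_right, cons_mulVec, dotProduct, Fin.sum_univ_two,
      cons_val_zero, cons_val_one, cons_val_fin_one, zero_mul, add_zero, empty_mulVec,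
      Pi.smul_apply, smul_eq_mul]
    ring
  · exact ⟨v 0 + X * v 1, by simp [tripleMatrix, dotProduct, Fin.sum_univ_two]⟩

theorem coeff_zero_eq_of_modEqRows_tripleMatrix {y : ℕ} (hy : 3 ≤ y)
    {A B : Matrix (Fin 2) (Fin 2) K[X]} (hb : X ^ 2 ∣ A 0 1)
    (h : ModEqRows y 2 (B * tripleMatrix K y) (tripleMatrix K y * A)) :
    (B 0 0).coeff 0 = (A 0 0).coeff 0 ∧ (B 1 1).coeff 0 = (A 0 0).coeff 0 ∧
      (A 1 1).coeff 0 = (A 0 0).coeff 0 := by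
  obtain ⟨k, rfl⟩ : ∃ k, y = k + 3 := ⟨y - 3, by omega⟩
  obtain ⟨h00, h10⟩ := h 0
  obtain ⟨h01, h11⟩ := h 1
  have e00 := X_pow_dvd_iff.mp h00 (k + 1) (by omega)
  have e01 := X_pow_dvd_iff.mp h01 (k + 2) (by omega)
  have e10 := X_pow_dvd_iff.mp h10 0 (by omega)
  have e11 := X_pow_dvd_iff.mp h11 1 (by omega)
  have hb1 := X_pow_dvd_iff.mp hb 1 (by omega)
  simp only [tripleMatrix, Nat.reduceSubDiff, Fin.isValue, mul_apply, of_apply, cons_val',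
    cons_val_zero, cons_val_fin_one, Fin.sum_univ_two, cons_val_one, mul_one, zero_mul, add_zero,
    coeff_sub, coeff_add, coeff_mul_X_pow', le_refl, ↓reduceIte, tsub_self, coeff_X_pow_mul',
    mul_zero, zero_add, coeff_mul_X, add_le_add_iff_left, Nat.one_le_ofNat, add_tsub_cancel_left,
    one_mul, mul_coeff_zero, coeff_X_pow, Nat.right_eq_add, Nat.add_eq_zero_iff, one_ne_zero,
    and_false, coeff_X_zero, coeff_X_mul] at e00 e01 e10 e11
  exact ⟨by linear_combination e00 - e01 - hb1, by linear_combination e10,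
    by linear_combination e10 - e11 - hb1⟩

end

/-- For `t ≥ 3`, `y ≥ 3`, the map `C : J_t ⊕ J_1 → J_y ⊕ J_2` with components
`T^{y-2} : J_t → J_y`, the canonical reduction `J_t → J_2`, `T : J_1 → J_2`, and
`0 : J_1 → J_y` satisfies `T² ∘ C = 0`, and the triple `(J_t ⊕ J_1, J_y ⊕ J_2, C)` is
indecomposable. -/
theorem triple_2x2_indecomposable (K : Type*) [Field K] (t y : ℕ)
    (ht : 3 ≤ t) (hy : 3 ≤ y) :
    (∀ x, ((X : Polynomial K) ^ 2) •
      (LinearMap.prod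
        ((mulTpow K t y (y - 2)).coprod (0 : J K 1 →ₗ[Polynomial K] J K y))
        ((mulTpow K t 2 0).coprod (mulTpow K 1 2 1))) x = 0) ∧
    TripleIndecomposable
      (LinearMap.prod
        ((mulTpow K t y (y - 2)).coprod (0 : J K 1 →ₗ[Polynomial K] J K y))
        ((mulTpow K t 2 0).coprod (mulTpow K 1 2 1))) := by
  change (∀ x, (X : K[X]) ^ 2 • tripleMap K t y x = 0) ∧
    TripleIndecomposable (tripleMap K t y)
  have : Nontrivial (J K t) := J.nontrivial (by omega)
  refine ⟨X_sq_smul_tripleMap (by omega) (by omega), Or.inl inferInstance,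
    fun F G hGC hFF hGG => ?_⟩
  have hC : Represents (tripleMap K t y) (tripleMatrix K y) := represents_tripleMap (by omega)
  obtain ⟨A, hA⟩ := exists_represents F
  obtain ⟨B, hB⟩ := exists_represents G
  have hb : X ^ 2 ∣ A 0 1 := X_pow_dvd_iff.mpr fun k hk => by
    simpa using X_pow_dvd_iff.mp hA.X_pow_dvd_X_pow_mul (k + 1) (by omega)
  obtain ⟨hB₀, hB₁, hA₁⟩ :=
    coeff_zero_eq_of_modEqRows_tripleMatrix hy hb (((hB.comp hC).eq_iff (hC.comp hA)).mp hGC)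
  have hε := isIdempotentElem_coeff_zero_of_mul_self (by omega)
    (((hA.comp hA).eq_iff hA).mp hFF) (dvd_trans (dvd_pow_self X two_ne_zero) hb)
  rw [hA.eq_C_smul_id_of_comp_self (by omega) hFF hε rfl hA₁,
    hB.eq_C_smul_id_of_comp_self (by omega) hGG hε hB₀ hB₁]
  rcases IsIdempotentElem.iff_eq_zero_or_one.mp hε with h | h <;> simp [h]
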